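/- For the 7-dimensional Lie algebra L_{7,6} with nonzero brackets [X_1,X_2]=2X_2, [X_1,X_3]=-2X_3, [X_2,X_3]=X_1, [X_1,X_4]=3X_4, [X_1,X_5]=X_5, [X_1,X_6]=-X_6, [X_1,X_7]=-3X_7, [X_2,X_5]=3X_4, [X_2,X_6]=2X_5, [X_2,X_7]=X_6, [X_3,X_4]=X_5, [X_3,X_5]=2X_6, [X_3,X_6]=3X_7, the polynomial I_1 = 27 x_4^2 x_7^2 - 18 x_4 x_5 x_6 x_7 - x_5^2 x_6^2 + 4 x_6^3 x_4 + 4 x_7 x_5^3 is annihilated by all coadjoint vector fields X̂_i = C_{ij}^k x_k ∂/∂x_j, i = 1,…,7. -/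

import Mathlib

/-!
Indices are 0-based, so `X_k` of the paper is index `k - 1`. The coordinates `x 3, …, x 6`, dual
to the ideal `ℝ⁴`, are the coefficients of a binary cubic, and `I₁` depends only on them. As `ℝ⁴`
is an abelian ideal, the fields `X̂ 3, …, X̂ 6` have no component along these coordinates, so they
kill `I₁`. On them, `X̂ 0, X̂ 1, X̂ 2` act as the infinitesimal `sl(2)`-action on binary cubics,
which kills the discriminant `I₁`.
-/

open scoped BigOperators

noncomputable def Xhat {n : ℕ} (C : Fin n → Fin n → Fin n → ℝ)
    (F : (Fin n → ℝ) → ℝ) (i : Fin n) (x : Fin n → ℝ) : ℝ :=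
  ∑ j, ∑ k, C i j k * x k * fderiv ℝ F x (Pi.single j 1)

def C76 : Fin 7 → Fin 7 → Fin 7 → ℝ := fun i j k =>
  match i.1, j.1, k.1 with
  | 0, 1, 1 => 2
  | 1, 0, 1 => -2
  | 0, 2, 2 => -2
  | 2, 0, 2 => 2
  | 1, 2, 0 => 1
  | 2, 1, 0 => -1
  | 0, 3, 3 => 3
  | 3, 0, 3 => -3
  | 0, 4, 4 => 1
  | 4, 0, 4 => -1
  | 0, 5, 5 => -1
  | 5, 0, 5 => 1
  | 0, 6, 6 => -3
  | 6, 0, 6 => 3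
  | 1, 4, 3 => 3
  | 4, 1, 3 => -3
  | 1, 5, 4 => 2
  | 5, 1, 4 => -2
  | 1, 6, 5 => 1
  | 6, 1, 5 => -1
  | 2, 3, 4 => 1
  | 3, 2, 4 => -1
  | 2, 4, 5 => 2
  | 4, 2, 5 => -2
  | 2, 5, 6 => 3
  | 5, 2, 6 => -3
  | _, _, _ => 0

def coadjointField {n : ℕ} (C : Fin n → Fin n → Fin n → ℝ) (i : Fin n) (x : Fin n → ℝ) :
    Fin n → ℝ :=
  fun j => ∑ k, C i j k * x k

theorem Xhat_eq_fderiv_coadjointField {n : ℕ} (C : Fin n → Fin n → Fin n → ℝ)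
    (F : (Fin n → ℝ) → ℝ) (i : Fin n) (x : Fin n → ℝ) :
    Xhat C F i x = fderiv ℝ F x (coadjointField C i x) := by
  conv_rhs => rw [← Finset.univ_sum_single (coadjointField C i x)]
  simp only [Xhat, map_sum, ← Finset.sum_mul]
  refine Finset.sum_congr rfl fun j _ => ?_
  rw [← smul_eq_mul, ← map_smul, ← Pi.single_smul', smul_eq_mul, mul_one]
  rfl

def I₁ (y : Fin 7 → ℝ) : ℝ :=
  27 * (y 3)^2 * (y 6)^2 - 18 * y 3 * y 4 * y 5 * y 6
    - (y 4)^2 * (y 5)^2 + 4 * (y 5)^3 * y 3 + 4 * y 6 * (y 4)^3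

theorem fderiv_I₁_apply (x v : Fin 7 → ℝ) :
    fderiv ℝ I₁ x v =
      (54 * x 3 * (x 6)^2 - 18 * x 4 * x 5 * x 6 + 4 * (x 5)^3) * v 3
      + (-18 * x 3 * x 5 * x 6 - 2 * x 4 * (x 5)^2 + 12 * x 6 * (x 4)^2) * v 4
      + (-18 * x 3 * x 4 * x 6 - 2 * (x 4)^2 * x 5 + 12 * (x 5)^2 * x 3) * v 5
      + (54 * (x 3)^2 * x 6 - 18 * x 3 * x 4 * x 5 + 4 * (x 4)^3) * v 6 := by
  have coord (i : Fin 7) : HasFDerivAt (fun y : Fin 7 → ℝ => y i) (ContinuousLinearMap.proj i) x :=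
    hasFDerivAt_apply (𝕜 := ℝ) i x
  have hI₁ : HasFDerivAt I₁ _ x :=
    (((((((coord 3).pow 2).const_mul 27).mul ((coord 6).pow 2)).sub
      (((((coord 3).const_mul 18).mul (coord 4)).mul (coord 5)).mul (coord 6))).sub
      (((coord 4).pow 2).mul ((coord 5).pow 2))).add
      ((((coord 5).pow 3).const_mul 4).mul (coord 3))).add
      (((coord 6).const_mul 4).mul ((coord 4).pow 3))
  rw [hI₁.fderiv]
  simp only [Fin.isValue, Nat.add_one_sub_one, pow_one, nsmul_eq_mul, Nat.cast_ofNat, Pi.mul_apply,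
    smul_add, add_apply, sub_apply, smul_apply, ContinuousLinearMap.proj_apply, smul_eq_mul]
  ring

theorem coadjointField_C76_three (i : Fin 7) (x : Fin 7 → ℝ) :
    coadjointField C76 i x 3 = ![3 * x 3, 0, x 4, 0, 0, 0, 0] i := by
  fin_cases i <;> simp [coadjointField, Fin.sum_univ_seven, C76]

theorem coadjointField_C76_four (i : Fin 7) (x : Fin 7 → ℝ) :
    coadjointField C76 i x 4 = ![x 4, 3 * x 3, 2 * x 5, 0, 0, 0, 0] i := by
  fin_cases i <;> simp [coadjointField, Fin.sum_univ_seven, C76]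

theorem coadjointField_C76_five (i : Fin 7) (x : Fin 7 → ℝ) :
    coadjointField C76 i x 5 = ![-x 5, 2 * x 4, 3 * x 6, 0, 0, 0, 0] i := by
  fin_cases i <;> simp [coadjointField, Fin.sum_univ_seven, C76]

theorem coadjointField_C76_six (i : Fin 7) (x : Fin 7 → ℝ) :
    coadjointField C76 i x 6 = ![-3 * x 6, x 5, 0, 0, 0, 0, 0] i := by
  fin_cases i <;> simp [coadjointField, Fin.sum_univ_seven, C76]

theorem L76_invariant :
    ∀ (i : Fin 7) (x : Fin 7 → ℝ),
      Xhat C76 (fun y => 27 * (y 3)^2 * (y 6)^2 - 18 * y 3 * y 4 * y 5 * y 6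
        - (y 4)^2 * (y 5)^2 + 4 * (y 5)^3 * y 3 + 4 * y 6 * (y 4)^3) i x = 0 := by
  intro i x
  rw [Xhat_eq_fderiv_coadjointField]
  change fderiv ℝ I₁ x _ = 0
  rw [fderiv_I₁_apply, coadjointField_C76_three, coadjointField_C76_four,
    coadjointField_C76_five, coadjointField_C76_six]
  fin_cases i <;>
    simp only [Fin.zero_eta, Fin.mk_one, Fin.reduceFinMk, Matrix.cons_val_zero,
      Matrix.cons_val_one, Matrix.cons_val] <;>
    ring
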